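/- arXiv:2411.15829 — 2 statements merged into one kernel-verified Lean document; each statement's English description precedes it below -/
import Mathlib

section
/- For any six 2×2 complex matrices y1, y2, y3, z1, z2, z3, one has the type I trace identity 2·tr([[y1]]·[[y2]]·[[y3]])·tr([[z1]]·[[z2]]·[[z3]]) + det(M) = 0, where M is the 3×3 matrix whose (i,j) entry is tr([[y_i]]·[[z_j]]). -/
/-!
Traceless 2×2 matrices form a 3-dimensional space. In coordinates with respect to the basis
`diag(1, -1)`, `E₀₁`, `E₁₀`, the form `tr([[y]]·[[z]])` has Gram matrix `G` with `det G = -2`, and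
`tr([[x]]·[[y]]·[[z]])` is the determinant of the coordinate matrix, being an alternating trilinear
form normalised by `tr(diag(1, -1)·E₀₁·E₁₀) = 1`. Hence the matrix `M` factors as `A·G·Bᵀ` with
`A`, `B` the coordinate matrices of the `yᵢ` and `zⱼ`, and `det M = -2·det A·det B`.
-/

/-- The 2×2 complex matrices. -/
abbrev M2 : Type := Matrix (Fin 2) (Fin 2) ℂ

/-- The traceless part `[[y]] = y - (1/2)·tr(y)·I` of a 2×2 complex matrix. -/
noncomputable def tl (y : M2) : M2 := y - (Matrix.trace y / 2) • (1 : M2)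

open Matrix

noncomputable def tlCoords (y : M2) : Fin 3 → ℂ := ![(y 0 0 - y 1 1) / 2, y 0 1, y 1 0]

def traceFormMatrix : Matrix (Fin 3) (Fin 3) ℂ := !![2, 0, 0; 0, 0, 1; 0, 1, 0]

lemma trace_tl_mul_tl (y z : M2) :
    trace (tl y * tl z) = tlCoords y ⬝ᵥ (traceFormMatrix *ᵥ tlCoords z) := by
  simp only [tl, tlCoords, traceFormMatrix, dotProduct, mulVec, Fin.sum_univ_three, of_apply,
    cons_val', cons_val_zero, cons_val_one, cons_val_two, trace_fin_two, mul_apply,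
    Fin.sum_univ_two, Matrix.sub_apply, Matrix.smul_apply, one_apply, smul_eq_mul]
  norm_num
  ring

lemma of_trace_tl_mul_tl {ι κ : Type*} (Y : ι → M2) (Z : κ → M2) :
    (of fun i j => trace (tl (Y i) * tl (Z j))) =
      (of fun i => tlCoords (Y i)) * traceFormMatrix * (of fun j => tlCoords (Z j))ᵀ := by
  ext i j
  simp only [of_apply, trace_tl_mul_tl, mul_apply, mulVec, dotProduct, transpose_apply,
    Fin.sum_univ_three]
  ring

lemma trace_tl_mul_tl_mul_tl (x y z : M2) :
    trace (tl x * tl y * tl z) = det (of fun i => tlCoords (![x, y, z] i)) := by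
  simp only [tl, tlCoords, det_fin_three, of_apply, cons_val_zero, cons_val_one, cons_val_two,
    trace_fin_two, mul_apply, Fin.sum_univ_two, Matrix.sub_apply, Matrix.smul_apply, one_apply,
    smul_eq_mul]
  norm_num
  ring

lemma det_traceFormMatrix : det traceFormMatrix = -2 := by
  simp [traceFormMatrix, det_fin_three]

theorem stmt_9 (y₁ y₂ y₃ z₁ z₂ z₃ : M2) :
    2 * Matrix.trace (tl y₁ * tl y₂ * tl y₃) * Matrix.trace (tl z₁ * tl z₂ * tl z₃)
      + Matrix.det (Matrix.of fun i j : Fin 3 =>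
          Matrix.trace (tl (![y₁, y₂, y₃] i) * tl (![z₁, z₂, z₃] j))) = 0 := by
  rw [of_trace_tl_mul_tl, det_mul, det_mul, det_transpose, det_traceFormMatrix,
    trace_tl_mul_tl_mul_tl, trace_tl_mul_tl_mul_tl]
  ring
end

section
/- For any nine 2×2 complex matrices b1, b2, b3, c1, c2, c3, a1, a2, a3, one has the trace identity θ(b1,b2,b3;c1,c2,c3)·s(a1,a2,a3) − θ(b1,b2,a3;c1,c2,c3)·s(a1,a2,b3) + θ(b1,b3,a3;c1,c2,c3)·s(a1,a2,b2) − θ(b2,b3,a3;c1,c2,c3)·s(a1,a2,b1) = 0, where θ(u1,u2,u3;w1,w2,w3) denotes the determinant of the 3×3 matrix whose (i,j) entry is s(u_i,w_j). -/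
/-- `s(y₁,y₂) = tr([[y₁]]·[[y₂]])`. -/
noncomputable def s2 (y₁ y₂ : M2) : ℂ := Matrix.trace (tl y₁ * tl y₂)

/-- `s(y₁,y₂,y₃) = tr([[y₁]]·[[y₂]]·[[y₃]])`. -/
noncomputable def s3 (y₁ y₂ y₃ : M2) : ℂ := Matrix.trace (tl y₁ * tl y₂ * tl y₃)

/-- `θ(u₁,u₂,u₃;w₁,w₂,w₃)` is the determinant of the 3×3 matrix with entries `s(uᵢ,wⱼ)`. -/
noncomputable def θ3 (u₁ u₂ u₃ w₁ w₂ w₃ : M2) : ℂ :=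
  Matrix.det (Matrix.of fun i j : Fin 3 => s2 (![u₁, u₂, u₃] i) (![w₁, w₂, w₃] j))

/-!
The expression is the Laplace expansion, along its last column, of the 4 × 4 determinant whose
rows are indexed by `b₁, b₂, b₃, a₃` and whose columns are the linear functionals
`s(·, c₁), s(·, c₂), s(·, c₃), s(a₁, a₂, ·)`. Each of these functionals evaluates on the
traceless part `[[u]]`, and the traceless 2 × 2 matrices form a space of dimension 3; so the
four vectors `[[b₁]], [[b₂]], [[b₃]], [[a₃]]` are linearly dependent, and a dependency among
them is a dependency among the rows of the determinant.
-/

open Module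

theorem Matrix.det_pairing_eq_zero_of_finrank_lt {K V ι : Type*} [Field K] [AddCommGroup V]
    [Module K V] [Fintype ι] [DecidableEq ι] (W : Submodule K V) [FiniteDimensional K W]
    (hW : finrank K W < Fintype.card ι) (v : ι → V) (hv : ∀ i, v i ∈ W) (f : ι → Dual K V) :
    (Matrix.of fun i j => f j (v i)).det = 0 := by
  have hdep : ¬ LinearIndependent K v := fun hli =>
    have hliW : LinearIndependent K fun i => (⟨v i, hv i⟩ : W) := .of_comp W.subtype hli
    hW.not_ge hliW.fintype_card_le_finrank
  obtain ⟨c, hc, i, hi⟩ := Fintype.not_linearIndependent_iff.mp hdep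
  refine Matrix.exists_vecMul_eq_zero_iff.mp ⟨c, fun h => hi (congrFun h i), ?_⟩
  ext j
  calc ∑ i, c i * f j (v i) = f j (∑ i, c i • v i) := by simp [map_sum]
    _ = 0 := by rw [hc, map_zero]

theorem Matrix.finrank_ker_traceLinearMap {K n : Type*} [Field K] [Fintype n] [Nonempty n] :
    finrank K (LinearMap.ker (Matrix.traceLinearMap n K K)) =
      Fintype.card n * Fintype.card n - 1 := by
  classical
  obtain ⟨i⟩ := ‹Nonempty n›
  have hrange : LinearMap.range (Matrix.traceLinearMap n K K) = ⊤ :=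
    LinearMap.range_eq_top.mpr fun x => ⟨Matrix.single i i x, Matrix.trace_single_eq_same i x⟩
  have := LinearMap.finrank_range_add_finrank_ker (Matrix.traceLinearMap n K K)
  rw [hrange, finrank_top, Module.finrank_matrix, finrank_self, mul_one] at this
  omega

theorem trace_tl (y : M2) : Matrix.trace (tl y) = 0 := by
  simp [tl, Matrix.trace_sub, Matrix.trace_smul]

theorem det_s2_s3_eq (b₁ b₂ b₃ c₁ c₂ c₃ a₁ a₂ a₃ : M2) :
    (Matrix.of fun i j : Fin 4 =>
      ![s2 (![b₁, b₂, b₃, a₃] i) c₁, s2 (![b₁, b₂, b₃, a₃] i) c₂, s2 (![b₁, b₂, b₃, a₃] i) c₃,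
        s3 a₁ a₂ (![b₁, b₂, b₃, a₃] i)] j).det =
    θ3 b₁ b₂ b₃ c₁ c₂ c₃ * s3 a₁ a₂ a₃ - θ3 b₁ b₂ a₃ c₁ c₂ c₃ * s3 a₁ a₂ b₃
      + θ3 b₁ b₃ a₃ c₁ c₂ c₃ * s3 a₁ a₂ b₂ - θ3 b₂ b₃ a₃ c₁ c₂ c₃ * s3 a₁ a₂ b₁ := by
  rw [Matrix.det_succ_column _ 3]
  simp only [Nat.succ_eq_add_one, Nat.reduceAdd, Fin.isValue, Fin.coe_ofNat_eq_mod, Nat.mod_succ,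
    Matrix.of_apply, Matrix.cons_val, Matrix.det_fin_three, Matrix.submatrix_apply, Fin.succAbove,
    Fin.castSucc_zero, Fin.succ_zero_eq_one, Fin.reduceLT, ↓reduceIte, Matrix.cons_val_zero,
    Fin.castSucc_one, Fin.succ_one_eq_two, Matrix.cons_val_one, Fin.reduceCastSucc, Fin.reduceSucc,
    Fin.sum_univ_four, Nat.zero_mod, zero_add, lt_self_iff_false, not_lt_zero, Nat.one_mod,
    zero_lt_one, Fin.lt_one_iff, Fin.reduceEq, Nat.reduceMod, θ3]
  ring

theorem stmt_12 (b₁ b₂ b₃ c₁ c₂ c₃ a₁ a₂ a₃ : M2) :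
    θ3 b₁ b₂ b₃ c₁ c₂ c₃ * s3 a₁ a₂ a₃ - θ3 b₁ b₂ a₃ c₁ c₂ c₃ * s3 a₁ a₂ b₃
      + θ3 b₁ b₃ a₃ c₁ c₂ c₃ * s3 a₁ a₂ b₂ - θ3 b₂ b₃ a₃ c₁ c₂ c₃ * s3 a₁ a₂ b₁ = 0 := by
  let trace := Matrix.traceLinearMap (Fin 2) ℂ ℂ
  rw [← det_s2_s3_eq]
  exact Matrix.det_pairing_eq_zero_of_finrank_lt (LinearMap.ker trace)
    (by rw [Matrix.finrank_ker_traceLinearMap]; simp) (fun i => tl (![b₁, b₂, b₃, a₃] i))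
    (fun i => trace_tl _)
    ![trace ∘ₗ LinearMap.mulRight ℂ (tl c₁), trace ∘ₗ LinearMap.mulRight ℂ (tl c₂),
      trace ∘ₗ LinearMap.mulRight ℂ (tl c₃), trace ∘ₗ LinearMap.mulLeft ℂ (tl a₁ * tl a₂)]
end
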